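/- Let u = x_1⋯x_p and v = y_1⋯y_q with p, q ≥ 0 and x_i, y_j ∈ X for 1 ≤ i ≤ p, 1 ≤ j ≤ q (so u and v are words in the free monoid M(X), possibly empty). Then Δ(u⋄v) = Δ(u)⋄Δ(v). -/

import Mathlib

open TensorProduct

universe u v

/-- Letters of Rota-Baxter bracketed words: either a variable from `X` or a
bracketed word `⌊w⌋` (a list of letters). -/
inductive RBL (X : Type u) : Type u
  | var : X → RBL X
  | br : List (RBL X) → RBL X

namespace RBL

variable {X : Type u}

/-- `a.isBr = true` iff the letter `a` is a bracketed element `⌊w⌋ ∈ ⌊X_∞⌋`. -/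
def isBr : RBL X → Bool
  | var _ => false
  | br _ => true

mutual
  /-- Validity of a letter: the inside of a bracket must be a Rota-Baxter bracketed word. -/
  def valid : RBL X → Prop
    | var _ => True
    | br l => wordValid l
  /-- `wordValid l` says that the list of letters `l` is a Rota-Baxter bracketed word,
  i.e. all letters are valid and the letters alternate (no two consecutive brackets). -/
  def wordValid : List (RBL X) → Prop
    | [] => True
    | [a] => valid a
    | a :: b :: l => valid a ∧ ¬(a.isBr = true ∧ b.isBr = true) ∧ wordValid (b :: l)
end

lemma wordValid_nil : wordValid ([] : List (RBL X)) := by simp [wordValid]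

lemma wordValid_var (x : X) : wordValid [var x] := by simp [wordValid, valid]

lemma wordValid_br {l : List (RBL X)} (h : wordValid l) : wordValid [br l] := by
  simpa [wordValid, valid] using h

mutual
  /-- The total degree of a letter. -/
  def degL : RBL X → ℕ
    | var _ => 1
    | br l => degW l + 1
  /-- The total degree of a word: the number of occurrences of brackets (i.e. of `P`)
  plus the number of occurrences of letters of `X`. -/
  def degW : List (RBL X) → ℕ
    | [] => 0
    | a :: l => degL a + degW l
end

end RBL

/-- The set `X_∞` of Rota-Baxter bracketed words on `X`. -/
def RBWord (X : Type u) : Type u := {l : List (RBL X) // RBL.wordValid l}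

namespace RBWord

variable {X : Type u}

/-- The empty word `1`. -/
def one : RBWord X := ⟨[], RBL.wordValid_nil⟩

/-- The total degree of a Rota-Baxter bracketed word. -/
def deg (w : RBWord X) : ℕ := RBL.degW w.1

end RBWord

variable (k : Type v) [CommRing k] (X : Type u)

/-- The free `k`-module `kX_∞` on the Rota-Baxter bracketed words. -/
abbrev RBMod : Type max u v := RBWord X →₀ k

variable {X}

/-- A Rota-Baxter bracketed word viewed as a basis element of `kX_∞`. -/
noncomputable def sing (w : RBWord X) : RBMod k X := Finsupp.single w 1

variable (X)

/-- The Rota-Baxter operator `P` on `kX_∞`, sending a basis word `w` to `⌊w⌋`. -/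
noncomputable def Pop : RBMod k X →ₗ[k] RBMod k X :=
  Finsupp.lmapDomain k k fun w => (⟨[RBL.br w.1], RBL.wordValid_br w.2⟩ : RBWord X)

/-- Concatenation on the left by `u₀` and on the right by `v₀`, as a linear map on `kX_∞`
(sending basis words whose concatenation is not valid to `0`; in all uses below
the concatenations are valid). -/
noncomputable def concatLR (u₀ v₀ : List (RBL X)) : RBMod k X →ₗ[k] RBMod k X :=
  Finsupp.lsum k fun w =>
    letI := Classical.dec (RBL.wordValid (u₀ ++ w.1 ++ v₀))
    if h : RBL.wordValid (u₀ ++ w.1 ++ v₀) then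
      Finsupp.lsingle (⟨u₀ ++ w.1 ++ v₀, h⟩ : RBWord X) else 0

/-- The counit `ε : kX_∞ → k`, `ε(1) = 1` and `ε(w) = 0` for basis words `w ≠ 1`. -/
noncomputable def eps : RBMod k X →ₗ[k] k := Finsupp.lapply RBWord.one

/-- The homogeneous component `H^(n)` of `kX_∞`: the span of the basis words of total
degree `n`. -/
noncomputable def Hdeg (n : ℕ) : Submodule k (RBMod k X) :=
  Finsupp.supported k k {w : RBWord X | w.deg = n}

variable (lam : k)

/-- The data of the product `⋄` on the free Rota-Baxter algebra `kX_∞` of weight `lam`,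
together with its recursive defining equations:
* if the concatenation of `u` and `v` is again a Rota-Baxter bracketed word (in particular
  if `u` or `v` is empty, or if the last letter of `u` or the first letter of `v` is a
  variable), then `u ⋄ v` is the concatenation `uv`;
* if `u = u₀⌊ā⌋` and `v = ⌊b̄⌋v₀`, then
  `u ⋄ v = u₀(⌊⌊ā⌋ ⋄ b̄⌋ + ⌊ā ⋄ ⌊b̄⌋⌋ + λ⌊ā ⋄ b̄⌋)v₀`. -/
structure FreeRBAData where
  /-- the product `⋄`, as a `k`-bilinear map -/
  d : RBMod k X →ₗ[k] RBMod k X →ₗ[k] RBMod k X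
  d_concat : ∀ (u v : RBWord X) (h : RBL.wordValid (u.1 ++ v.1)),
    d (sing k u) (sing k v) = sing k ⟨u.1 ++ v.1, h⟩
  d_br : ∀ (u₀ v₀ : List (RBL X)) (a b : RBWord X)
    (hu : RBL.wordValid (u₀ ++ [RBL.br a.1])) (hv : RBL.wordValid (RBL.br b.1 :: v₀)),
    d (sing k ⟨u₀ ++ [RBL.br a.1], hu⟩) (sing k ⟨RBL.br b.1 :: v₀, hv⟩)
      = concatLR k X u₀ v₀
          (Pop k X (d (Pop k X (sing k a)) (sing k b))
            + Pop k X (d (sing k a) (Pop k X (sing k b)))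
            + lam • Pop k X (d (sing k a) (sing k b)))

namespace FreeRBAData

variable {k X lam}

/-- The componentwise product `⋄ ⊗ ⋄` on `kX_∞ ⊗ kX_∞`. -/
noncomputable def mulT (D : FreeRBAData k X lam) :
    (RBMod k X ⊗[k] RBMod k X) →ₗ[k] (RBMod k X ⊗[k] RBMod k X) →ₗ[k]
      (RBMod k X ⊗[k] RBMod k X) :=
  TensorProduct.map₂ D.d D.d

end FreeRBAData

/-- The free Rota-Baxter algebra `kX_∞` of weight `lam` together with the coproduct `Δ`,
characterized by its recursive defining equations:
`Δ(1) = 1 ⊗ 1`, `Δ(x) = x ⊗ 1 + 1 ⊗ x` for `x ∈ X`,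
`Δ(⌊w⌋) = ⌊w⌋ ⊗ 1 + (id ⊗ P)Δ(w)`, and
`Δ(w₁ ⋄ ⋯ ⋄ w_m) = Δ(w₁) ⋄ ⋯ ⋄ Δ(w_m)` for the `⋄`-factorization of a word into its
(alternating) sequence of letters. -/
structure FreeRBBialgData extends FreeRBAData k X lam where
  /-- the coproduct `Δ` -/
  Dl : RBMod k X →ₗ[k] (RBMod k X ⊗[k] RBMod k X)
  Dl_one : Dl (sing k RBWord.one) = sing k RBWord.one ⊗ₜ[k] sing k RBWord.one
  Dl_var : ∀ (x : X),
    Dl (sing k ⟨[RBL.var x], RBL.wordValid_var x⟩)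
      = sing k ⟨[RBL.var x], RBL.wordValid_var x⟩ ⊗ₜ[k] sing k RBWord.one
        + sing k RBWord.one ⊗ₜ[k] sing k ⟨[RBL.var x], RBL.wordValid_var x⟩
  Dl_br : ∀ w : RBWord X,
    Dl (Pop k X (sing k w))
      = Pop k X (sing k w) ⊗ₜ[k] sing k RBWord.one
        + TensorProduct.map LinearMap.id (Pop k X) (Dl (sing k w))
  Dl_cons : ∀ (a : RBL X) (l : List (RBL X)) (h : RBL.wordValid (a :: l))
    (ha : RBL.wordValid [a]) (hl : RBL.wordValid l), l ≠ [] →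
    Dl (sing k ⟨a :: l, h⟩)
      = TensorProduct.map₂ d d (Dl (sing k ⟨[a], ha⟩)) (Dl (sing k ⟨l, hl⟩))

namespace RBL

variable {X : Type u}

lemma wordValid_map_var (s : List X) : wordValid (s.map RBL.var) := by
  induction s with
  | nil => exact wordValid_nil
  | cons a t ih =>
    cases t with
    | nil => exact wordValid_var a
    | cons b t' =>
      simp only [List.map_cons] at ih ⊢
      exact ⟨by simp [valid], by simp [isBr], ih⟩

end RBL

variable {X}

/-- The word `x₁ ⋯ x_m ∈ M(X)` as a basis element of `kX_∞`. -/
noncomputable def varWord (s : List X) : RBMod k X :=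
  sing k ⟨s.map RBL.var, RBL.wordValid_map_var s⟩

/-- A letter in `X ∪ ⌊X_∞⌋`, viewed as a basis element of `kX_∞` (invalid letters are
sent to `0`; they do not occur below). -/
noncomputable def letterMod (a : RBL X) : RBMod k X :=
  letI := Classical.dec (RBL.wordValid [a])
  if h : RBL.wordValid [a] then sing k ⟨[a], h⟩ else 0

variable (X)

/-- The tensor product `H^(p) ⊗ H^(q)` of homogeneous components, as a submodule of
`kX_∞ ⊗ kX_∞`. -/
noncomputable def HdegT (p q : ℕ) : Submodule k (RBMod k X ⊗[k] RBMod k X) :=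
  Submodule.map₂ (TensorProduct.mk k (RBMod k X) (RBMod k X)) (Hdeg k X p) (Hdeg k X q)

namespace FreeRBAData

variable {k X lam}

/-- The `⋄`-product `w₁ ⋄ (w₂ ⋄ (⋯ ⋄ (w_m ⋄ 1)))` of a sequence of letters. -/
noncomputable def prodList (D : FreeRBAData k X lam) (l : List (RBL X)) : RBMod k X :=
  l.foldr (fun a acc => D.d (letterMod k a) acc) (sing k RBWord.one)

end FreeRBAData

/-! On the free monoid, `Δ` is the image under `(u, v) ↦ u ⊗ v` of the monoid
homomorphism `M(X) → k[M(X) × M(X)]` making every letter primitive: both obey the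
recursion `Δ(x w) = Δ(x) ⋄ Δ(w)`. Since `⋄` is concatenation on `M(X)`, the map
`(u, v) ↦ u ⊗ v` carries the product of `k[M(X) × M(X)]` to `⋄ ⊗ ⋄`, so `Δ` inherits
multiplicativity on `M(X)` from the monoid homomorphism. -/

open MonoidAlgebra

variable {k X lam}

noncomputable def pairTensor :
    MonoidAlgebra k (FreeMonoid X × FreeMonoid X) →ₗ[k] RBMod k X ⊗[k] RBMod k X :=
  Finsupp.linearCombination k (fun p : FreeMonoid X × FreeMonoid X =>
      varWord k p.1.toList ⊗ₜ[k] varWord k p.2.toList) ∘ₗ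
    (coeffLinearEquiv k).toLinearMap

lemma pairTensor_single (p : FreeMonoid X × FreeMonoid X) (r : k) :
    pairTensor (single p r) = r • (varWord k p.1.toList ⊗ₜ[k] varWord k p.2.toList) := by
  simp [pairTensor, coeff_single]

lemma pairTensor_one :
    pairTensor (1 : MonoidAlgebra k (FreeMonoid X × FreeMonoid X))
      = sing k RBWord.one ⊗ₜ[k] sing k RBWord.one := by
  rw [one_def, pairTensor_single, one_smul]
  rfl

namespace FreeRBAData

lemma d_varWord (D : FreeRBAData k X lam) (s t : List X) :
    D.d (varWord k s) (varWord k t) = varWord k (s ++ t) := by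
  simp only [varWord, List.map_append]
  exact D.d_concat _ _ _

lemma mulT_varWord_tmul (D : FreeRBAData k X lam) (s t s' t' : List X) :
    D.mulT (varWord k s ⊗ₜ[k] varWord k t) (varWord k s' ⊗ₜ[k] varWord k t')
      = varWord k (s ++ s') ⊗ₜ[k] varWord k (t ++ t') := by
  rw [mulT, map₂_apply_tmul, map_tmul, d_varWord, d_varWord]

lemma pairTensor_mul (D : FreeRBAData k X lam)
    (a b : MonoidAlgebra k (FreeMonoid X × FreeMonoid X)) :
    pairTensor (a * b) = D.mulT (pairTensor a) (pairTensor b) := by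
  induction a using MonoidAlgebra.induction_linear with
  | zero => simp
  | add a a' ha ha' => simp only [add_mul, map_add, ha, ha', LinearMap.add_apply]
  | single p r =>
    induction b using MonoidAlgebra.induction_linear with
    | zero => simp
    | add b b' hb hb' => simp only [mul_add, map_add, hb, hb']
    | single q r' =>
      simp only [single_mul_single, pairTensor_single, map_smul, LinearMap.smul_apply,
        mulT_varWord_tmul, Prod.fst_mul, Prod.snd_mul, FreeMonoid.toList_mul, mul_smul,
        smul_comm r r']

end FreeRBAData

noncomputable def wordCoproduct :
    FreeMonoid X →* MonoidAlgebra k (FreeMonoid X × FreeMonoid X) :=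
  FreeMonoid.lift fun x => single (FreeMonoid.of x, 1) 1 + single (1, FreeMonoid.of x) 1

namespace FreeRBBialgData

lemma Dl_varWord (D : FreeRBBialgData k X lam) (s : List X) :
    D.Dl (varWord k s) = pairTensor (wordCoproduct (FreeMonoid.ofList s)) := by
  induction s with
  | nil => rw [FreeMonoid.ofList_nil, map_one, pairTensor_one]; exact D.Dl_one
  | cons x s ih =>
    have hx : D.Dl (varWord k [x]) = pairTensor (wordCoproduct (FreeMonoid.of x)) := by
      simp only [wordCoproduct, FreeMonoid.lift_eval_of, map_add, pairTensor_single,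
        FreeMonoid.toList_of, FreeMonoid.toList_one, one_smul]
      exact D.Dl_var x
    rcases eq_or_ne s [] with rfl | hs
    · exact hx
    · rw [FreeMonoid.ofList_cons, map_mul, D.pairTensor_mul, ← hx, ← ih]
      exact D.Dl_cons _ _ _ _ _ (by simpa using hs)

end FreeRBBialgData

/-- For words `u = x₁ ⋯ x_p` and `v = y₁ ⋯ y_q` in the free monoid `M(X)`
(possibly empty), `Δ(u ⋄ v) = Δ(u) ⋄ Δ(v)`. -/
theorem coproduct_diamond_words
    {k : Type v} [CommRing k] {X : Type u} {lam : k} (D : FreeRBBialgData k X lam)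
    (s t : List X) :
    D.Dl (D.d (varWord k s) (varWord k t))
      = D.toFreeRBAData.mulT (D.Dl (varWord k s)) (D.Dl (varWord k t)) := by
  rw [D.d_varWord, D.Dl_varWord, D.Dl_varWord, D.Dl_varWord, FreeMonoid.ofList_append,
    map_mul, D.pairTensor_mul]
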